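/- A graph that can be drawn with total angular resolution strictly greater than 120° is a disjoint union of paths and cycles, each cycle having at least 7 vertices; conversely one can also check the degree bound: in any drawing D with TAR(D) > 120°, every vertex has degree at most 2. -/

import Mathlib

open EuclideanGeometry Real

/-- The set of angles of a straight-line drawing (vertex angles and crossing angles);
`TAR(D) > 120°` means every such angle exceeds `2π/3`. -/
noncomputable def drawingAngles {V : Type*} (pos : V → EuclideanSpace ℝ (Fin 2))
    (E : Finset (Sym2 V)) : Set ℝ :=
  {θ | (∃ u a b : V, s(u, a) ∈ E ∧ s(u, b) ∈ E ∧ (s(u, a) : Sym2 V) ≠ s(u, b) ∧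
          θ = EuclideanGeometry.angle (pos a) (pos u) (pos b)) ∨
       (∃ (a b c d : V) (q : EuclideanSpace ℝ (Fin 2)), s(a, b) ∈ E ∧ s(c, d) ∈ E ∧
          (s(a, b) : Sym2 V) ≠ s(c, d) ∧ q ∈ openSegment ℝ (pos a) (pos b) ∧
          q ∈ openSegment ℝ (pos c) (pos d) ∧
          θ = EuclideanGeometry.angle (pos a) q (pos c))}

section AuxLemmas

open Finset

/-- Three nonzero vectors in a real inner product space cannot pairwise make angles
all exceeding `2π/3`. -/
private lemma aux_three_vectors {F : Type*} [NormedAddCommGroup F] [InnerProductSpace ℝ F]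
    {x y z : F} (hx : x ≠ 0) (hy : y ≠ 0) (hz : z ≠ 0)
    (h1 : 2*π/3 < InnerProductGeometry.angle x y)
    (h2 : 2*π/3 < InnerProductGeometry.angle x z)
    (h3 : 2*π/3 < InnerProductGeometry.angle y z) : False := by
  have key : ∀ a b : F, a ≠ 0 → b ≠ 0 → 2*π/3 < InnerProductGeometry.angle a b →
      (inner ℝ ((‖a‖⁻¹ • a : F)) ((‖b‖⁻¹ • b : F)) : ℝ) < -(1/2) := by
    intro a b ha hb hab
    have hc : Real.cos (InnerProductGeometry.angle a b) < Real.cos (2*π/3) := by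
      apply Real.cos_lt_cos_of_nonneg_of_le_pi ?_ (InnerProductGeometry.angle_le_pi a b) hab
      positivity
    have h2 : Real.cos (2*π/3) = -(1/2) := by
      have : (2*π/3 : ℝ) = π - π/3 := by ring
      rw [this, Real.cos_pi_sub, Real.cos_pi_div_three]
    rw [InnerProductGeometry.cos_angle, h2] at hc
    rw [real_inner_smul_left, real_inner_smul_right]
    have hna : 0 < ‖a‖ := norm_pos_iff.mpr ha
    have hnb : 0 < ‖b‖ := norm_pos_iff.mpr hb
    have : (inner ℝ a b : ℝ) / (‖a‖ * ‖b‖) = ‖a‖⁻¹ * (‖b‖⁻¹ * (inner ℝ a b : ℝ)) := by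
      field_simp
    linarith [this ▸ hc]
  set u := (‖x‖⁻¹ • x : F)
  set v := (‖y‖⁻¹ • y : F)
  set w := (‖z‖⁻¹ • z : F)
  have hu : ‖u‖ = 1 := norm_smul_inv_norm hx
  have hv : ‖v‖ = 1 := norm_smul_inv_norm hy
  have hw : ‖w‖ = 1 := norm_smul_inv_norm hz
  have k1 := key x y hx hy h1
  have k2 := key x z hx hz h2
  have k3 := key y z hy hz h3
  have h0 : (0:ℝ) ≤ (inner ℝ (u+v+w) (u+v+w) : ℝ) := real_inner_self_nonneg
  have hexp : (inner ℝ (u+v+w) (u+v+w) : ℝ) =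
      ‖u‖^2 + ‖v‖^2 + ‖w‖^2 + 2*(inner ℝ u v : ℝ) + 2*(inner ℝ u w : ℝ) + 2*(inner ℝ v w : ℝ) := by
    simp only [inner_add_left, inner_add_right, real_inner_self_eq_norm_sq]
    rw [real_inner_comm v u, real_inner_comm w u, real_inner_comm w v]
    ring
  rw [hexp, hu, hv, hw] at h0
  norm_num at h0
  linarith

private lemma cut_lemma {p : ℕ} (hp : 1 ≤ p) (hp6 : p ≤ 6) (φ : ℕ → ℝ) (h0 : φ 0 = 0)
    (hpp : φ p = 0) (hstep : ∀ k < p, |φ (k+1) - φ k| < π/3) :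
    ∃ ψ : ℝ, ∀ i ≤ p, |φ i - ψ| < π/2 := by
  set τ : ℕ → ℝ := fun k => φ (k+1) - φ k with hτ
  have hT : ∑ k ∈ range p, |τ k| < 2 * π := by
    have h1 : ∑ k ∈ range p, |τ k| < ∑ k ∈ range p, (π/3) := by
      apply Finset.sum_lt_sum_of_nonempty (by simp; omega)
      intro k hk
      exact hstep k (Finset.mem_range.mp hk)
    have h2 : ∑ k ∈ range p, (π/3 : ℝ) = p * (π/3) := by simp [mul_comm]
    have hπ := Real.pi_pos
    have : (p : ℝ) ≤ 6 := by exact_mod_cast hp6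
    nlinarith
  have tele : ∀ i, φ i = ∑ k ∈ range i, τ k := by
    intro i
    rw [Finset.sum_range_sub (f := φ), h0, sub_zero]
  have pair : ∀ i ≤ p, ∀ j ≤ p, j ≤ i → 2 * |φ i - φ j| ≤ ∑ k ∈ range p, |τ k| := by
    intro i hi j hj hji
    have e1 : φ i - φ j = ∑ k ∈ Finset.Ico j i, τ k := by
      rw [Finset.sum_Ico_eq_sub _ hji, ← tele, ← tele]
    have e2 : φ i - φ j = -(∑ k ∈ Finset.Ico i p, τ k) - ∑ k ∈ Finset.Ico 0 j, τ k := by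
      have t1 : φ p - φ i = ∑ k ∈ Finset.Ico i p, τ k := by
        rw [Finset.sum_Ico_eq_sub _ hi, ← tele, ← tele]
      have t2 : φ j - φ 0 = ∑ k ∈ Finset.Ico 0 j, τ k := by
        rw [Finset.sum_Ico_eq_sub _ (Nat.zero_le j), ← tele, ← tele]
      rw [← t1, ← t2, h0, hpp]; ring
    have b1 : |φ i - φ j| ≤ ∑ k ∈ Finset.Ico j i, |τ k| := by
      rw [e1]; exact Finset.abs_sum_le_sum_abs _ _
    have b2 : |φ i - φ j| ≤ (∑ k ∈ Finset.Ico i p, |τ k|) + ∑ k ∈ Finset.Ico 0 j, |τ k| := by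
      have d1 := Finset.abs_sum_le_sum_abs τ (Finset.Ico i p)
      have d2 := Finset.abs_sum_le_sum_abs τ (Finset.Ico 0 j)
      have d3 : |φ i - φ j| ≤ |∑ k ∈ Finset.Ico i p, τ k| + |∑ k ∈ Finset.Ico 0 j, τ k| := by
        rw [e2]
        calc |-∑ k ∈ Finset.Ico i p, τ k - ∑ k ∈ Finset.Ico 0 j, τ k|
            ≤ |-∑ k ∈ Finset.Ico i p, τ k| + |∑ k ∈ Finset.Ico 0 j, τ k| := abs_sub _ _
          _ = |∑ k ∈ Finset.Ico i p, τ k| + |∑ k ∈ Finset.Ico 0 j, τ k| := by rw [abs_neg]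
      linarith
    have split : (∑ k ∈ Finset.Ico 0 j, |τ k|) + (∑ k ∈ Finset.Ico j i, |τ k|)
        + (∑ k ∈ Finset.Ico i p, |τ k|) = ∑ k ∈ range p, |τ k| := by
      rw [Finset.sum_Ico_consecutive _ (Nat.zero_le j) hji,
          Finset.sum_Ico_consecutive _ (Nat.zero_le i) hi]
      simp
    linarith
  have hne : ((range (p+1)).image φ).Nonempty := ⟨φ 0, Finset.mem_image_of_mem _ (by simp)⟩
  set M := ((range (p+1)).image φ).max' hne with hM
  set m := ((range (p+1)).image φ).min' hne with hm
  obtain ⟨i0, hi0, hMi⟩ := Finset.mem_image.mp (((range (p+1)).image φ).max'_mem hne)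
  obtain ⟨j0, hj0, hmj⟩ := Finset.mem_image.mp (((range (p+1)).image φ).min'_mem hne)
  have hi0p : i0 ≤ p := by have := Finset.mem_range.mp hi0; omega
  have hj0p : j0 ≤ p := by have := Finset.mem_range.mp hj0; omega
  have hMm : M - m < π := by
    have hpair := pair (max i0 j0) (by omega) (min i0 j0) (by omega) min_le_max
    have habs : |φ i0 - φ j0| = |φ (max i0 j0) - φ (min i0 j0)| := by
      rcases le_total i0 j0 with h | h
      · rw [max_eq_right h, min_eq_left h, abs_sub_comm]
      · rw [max_eq_left h, min_eq_right h]
    have hle : M - m ≤ |φ i0 - φ j0| := by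
      rw [hM, hm, ← hMi, ← hmj]; exact le_abs_self _
    rw [habs] at hle
    linarith
  refine ⟨(M + m) / 2, fun i hi => ?_⟩
  have hmem : φ i ∈ (range (p+1)).image φ :=
    Finset.mem_image_of_mem _ (Finset.mem_range.mpr (by omega))
  have h1 : φ i ≤ M := Finset.le_max' _ _ hmem
  have h2 : m ≤ φ i := Finset.min'_le _ _ hmem
  rw [abs_sub_lt_iff]
  constructor <;> linarith

/-- A closed polygon with at most 6 edges cannot have all its exterior (turning) angles
smaller than `π/3` in absolute value. -/
private lemma no_small_polygon {p : ℕ} (hp3 : 3 ≤ p) (hp6 : p ≤ 6) (z : ℕ → ℂ)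
    (hz : ∀ i < p, z i ≠ 0) (hsum : ∑ i ∈ Finset.range p, z i = 0)
    (hang : ∀ i < p, |(z ((i+1) % p) / z i).arg| < π/3) : False := by
  have hp1 : 1 ≤ p := by omega
  set τ : ℕ → ℝ := fun i => (z ((i+1) % p) / z i).arg with hτdef
  set φ : ℕ → ℝ := fun n => ∑ k ∈ Finset.range n, τ k with hφdef
  have hφ0 : φ 0 = 0 := by simp [hφdef]
  have hstep : ∀ k, φ (k+1) - φ k = τ k := by
    intro k; simp [hφdef, Finset.sum_range_succ]
  have key : ∀ i, i ≤ p → ∃ R : ℝ, 0 < R ∧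
      z (i % p) = z 0 * R * Complex.exp (φ i * Complex.I) := by
    intro i
    induction i with
    | zero =>
      intro _
      exact ⟨1, one_pos, by simp [hφ0]⟩
    | succ n ih =>
      intro hn1
      have hn : n < p := hn1
      obtain ⟨R, hR, hze⟩ := ih (by omega)
      have hnm : n % p = n := Nat.mod_eq_of_lt hn
      rw [hnm] at hze
      have hzn : z n ≠ 0 := hz n hn
      have hznext : z ((n+1) % p) ≠ 0 := hz _ (Nat.mod_lt _ (by omega))
      have hq : z ((n+1) % p) / z n ≠ 0 := div_ne_zero hznext hzn
      set s : ℝ := ‖z ((n+1) % p) / z n‖ with hs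
      have habs : (s : ℂ) * Complex.exp (τ n * Complex.I)
          = z ((n+1) % p) / z n := Complex.norm_mul_exp_arg_mul_I _
      have hposabs : 0 < s := norm_pos_iff.mpr hq
      refine ⟨R * s, by positivity, ?_⟩
      have hzz : z ((n+1) % p) = z n * ((s : ℂ) * Complex.exp (τ n * Complex.I)) := by
        rw [habs]; field_simp
      have hφs : (φ (n+1) : ℂ) * Complex.I = φ n * Complex.I + τ n * Complex.I := by
        have h := hstep n
        have : φ (n+1) = φ n + τ n := by linarith
        rw [this]; push_cast; ring
      rw [hzz, hze, hφs, Complex.exp_add]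
      push_cast
      ring
  have hz0 : z 0 ≠ 0 := hz 0 (by omega)
  obtain ⟨R, hR, hzp⟩ := key p le_rfl
  rw [Nat.mod_self] at hzp
  have hunit : (R : ℂ) * Complex.exp (φ p * Complex.I) = 1 := by
    have h : z 0 * ((R : ℂ) * Complex.exp (φ p * Complex.I)) = z 0 := by
      rw [← mul_assoc]; exact hzp.symm
    rcases mul_right_eq_self₀.mp h with h1 | h1
    · exact h1
    · exact absurd h1 hz0
  have hsin : Real.sin (φ p) = 0 := by
    have h := congrArg Complex.im hunit
    simp [Complex.mul_im, Complex.exp_ofReal_mul_I_re, Complex.exp_ofReal_mul_I_im] at h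
    rcases h with h | h
    · exact absurd h hR.ne'
    · exact h
  have hcos : 0 < Real.cos (φ p) := by
    have hre := congrArg Complex.re hunit
    simp [Complex.mul_re, Complex.exp_ofReal_mul_I_re, Complex.exp_ofReal_mul_I_im] at hre
    nlinarith [Real.neg_one_le_cos (φ p), hR]
  have hφbound : |φ p| < 2 * π := by
    have h1 : |φ p| ≤ ∑ k ∈ Finset.range p, |τ k| := by
      rw [hφdef]; exact Finset.abs_sum_le_sum_abs _ _
    have h2 : ∑ k ∈ Finset.range p, |τ k| < ∑ k ∈ Finset.range p, (π/3) := by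
      apply Finset.sum_lt_sum_of_nonempty (by simp; omega)
      intro k hk; exact hang k (Finset.mem_range.mp hk)
    have h3 : ∑ k ∈ Finset.range p, (π/3 : ℝ) = p * (π/3) := by simp [mul_comm]
    have hπ := Real.pi_pos
    have hc : (p : ℝ) ≤ 6 := by exact_mod_cast hp6
    nlinarith
  have hφp : φ p = 0 := by
    obtain ⟨n, hn⟩ := Real.sin_eq_zero_iff.mp hsin
    have hπ := Real.pi_pos
    have habs2 : |(n : ℝ)| * π < 2 * π := by
      have h4 : |(n : ℝ) * π| < 2 * π := hn ▸ hφbound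
      rwa [abs_mul, abs_of_pos hπ] at h4
    have h5 : |(n : ℝ)| < 2 := by nlinarith
    have hint : |n| < 2 := by
      have : ((|n| : ℤ) : ℝ) < 2 := by rw [Int.cast_abs]; exact h5
      exact_mod_cast this
    obtain ⟨hl, hr⟩ := abs_lt.mp hint
    interval_cases n
    · exfalso; rw [← hn] at hcos; push_cast at hcos
      rw [neg_one_mul, Real.cos_neg, Real.cos_pi] at hcos; linarith
    · rw [← hn]; push_cast; ring
    · exfalso; rw [← hn] at hcos; push_cast at hcos
      rw [one_mul, Real.cos_pi] at hcos; linarith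
  obtain ⟨ψ, hψ⟩ := cut_lemma hp1 hp6 φ hφ0 hφp (fun k hk => by rw [hstep]; exact hang k hk)
  have hpos : ∀ i ∈ Finset.range p, 0 < (z i * Complex.exp ((-ψ : ℝ) * Complex.I) / z 0).re := by
    intro i hi
    have hip : i < p := Finset.mem_range.mp hi
    obtain ⟨R', hR', hze⟩ := key i (by omega)
    rw [Nat.mod_eq_of_lt hip] at hze
    have heq : z i * Complex.exp ((-ψ : ℝ) * Complex.I) / z 0
        = (R' : ℝ) * Complex.exp (((φ i - ψ : ℝ)) * Complex.I) := by
      rw [hze]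
      rw [show ((φ i - ψ : ℝ) : ℂ) * Complex.I
          = (φ i : ℝ) * Complex.I + ((-ψ : ℝ) : ℂ) * Complex.I by push_cast; ring,
        Complex.exp_add]
      field_simp
    rw [heq]
    have hcos2 : 0 < Real.cos (φ i - ψ) := by
      apply Real.cos_pos_of_mem_Ioo
      have h6 := hψ i (by omega)
      rw [abs_lt] at h6
      constructor
      · linarith [h6.1]
      · linarith [h6.2]
    simp only [Complex.mul_re, Complex.ofReal_re, Complex.ofReal_im,
      Complex.exp_ofReal_mul_I_re, Complex.exp_ofReal_mul_I_im, zero_mul, sub_zero]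
    positivity
  have hzero : (∑ i ∈ Finset.range p, z i * Complex.exp ((-ψ : ℝ) * Complex.I) / z 0) = 0 := by
    rw [← Finset.sum_div, ← Finset.sum_mul, hsum, zero_mul, zero_div]
  have hgt := Finset.sum_pos hpos (by simp; omega)
  rw [← Complex.re_sum, hzero] at hgt
  simp at hgt

private lemma getVert_support_getElem {V : Type*} {G : SimpleGraph V} {u v : V} (w : G.Walk u v)
    {i : ℕ} (hi : i ≤ w.length) : w.support[i]? = some (w.getVert i) := by
  induction w generalizing i with
  | nil =>
    simp only [SimpleGraph.Walk.length_nil, Nat.le_zero] at hi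
    subst hi
    simp [SimpleGraph.Walk.getVert]
  | cons h q ih =>
    cases i with
    | zero => simp [SimpleGraph.Walk.getVert]
    | succ n =>
      simp only [SimpleGraph.Walk.support_cons, SimpleGraph.Walk.getVert_cons_succ]
      rw [List.getElem?_cons_succ]
      exact ih (by simpa using hi)

private lemma cycle_getVert_inj {V : Type*} {G : SimpleGraph V} {v : V} {w : G.Walk v v}
    (hc : w.IsCycle) {i j : ℕ} (hi1 : 1 ≤ i) (hip : i ≤ w.length) (hj1 : 1 ≤ j)
    (hjp : j ≤ w.length) (hij : w.getVert i = w.getVert j) : i = j := by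
  have hnodup := hc.2
  have hlen : w.support.tail.length = w.length := by
    have := SimpleGraph.Walk.length_support w
    have ht : w.support.tail.length = w.support.length - 1 := by simp
    omega
  have key : ∀ k, 1 ≤ k → k ≤ w.length → w.support.tail[k-1]? = some (w.getVert k) := by
    intro k hk1 hkp
    have h1 := getVert_support_getElem w hkp
    rw [SimpleGraph.Walk.support_eq_cons] at h1
    obtain ⟨k', rfl⟩ : ∃ k', k = k' + 1 := ⟨k - 1, by omega⟩
    rw [List.getElem?_cons_succ] at h1
    simpa using h1
  have e1 := key i hi1 hip
  have e2 := key j hj1 hjp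
  rw [hij] at e1
  have hi' : i - 1 < w.support.tail.length := by omega
  have hj' : j - 1 < w.support.tail.length := by omega
  rw [List.getElem?_eq_getElem hi'] at e1
  rw [List.getElem?_eq_getElem hj'] at e2
  have heq : w.support.tail[i-1] = w.support.tail[j-1] := by
    rw [Option.some_inj.mp e1, Option.some_inj.mp e2]
  have := (hnodup.getElem_inj_iff).mp heq
  omega

private lemma angle_eq_abs_arg {x y : ℂ} (hx : x ≠ 0) (hy : y ≠ 0) :
    InnerProductGeometry.angle x y = |(y / x).arg| := by
  have hq : y / x ≠ 0 := div_ne_zero hy hx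
  have h1 : (inner ℝ x y : ℝ) / (‖x‖ * ‖y‖) = Real.cos ((y / x).arg) := by
    rw [Complex.inner, Complex.cos_arg hq]
    rw [mul_comm y ((starRingEnd ℂ) x)]
    have hconj : (starRingEnd ℂ) x * y = (Complex.normSq x : ℝ) * (y / x) := by
      rw [show ((Complex.normSq x : ℝ) : ℂ) = (starRingEnd ℂ) x * x by
        rw [mul_comm]; exact (Complex.mul_conj x).symm]
      field_simp
    rw [hconj]
    have hre : ((Complex.normSq x : ℝ) * (y / x) : ℂ).re = Complex.normSq x * (y / x).re := by
      simp [Complex.mul_re]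
    rw [hre]
    rw [norm_div]
    have hax : 0 < ‖x‖ := norm_pos_iff.mpr hx
    have hay : 0 < ‖y‖ := norm_pos_iff.mpr hy
    rw [← Complex.sq_norm]
    field_simp
  rw [InnerProductGeometry.angle, h1, ← Real.cos_abs]
  exact Real.arccos_cos (abs_nonneg _) (Complex.abs_arg_le_pi _)

end AuxLemmas

/-- A graph that can be drawn with total angular resolution strictly greater
than 120° is a disjoint union of paths and cycles, each cycle having at least 7 vertices:
in any drawing D with TAR(D) > 120° every vertex has degree at most 2 (so the graph is a
disjoint union of paths and cycles), and every cycle of the graph has length at least 7. -/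
theorem stmt_19 {V : Type*} [Fintype V] (pos : V → EuclideanSpace ℝ (Fin 2))
    (hinj : Function.Injective pos)
    (E : Finset (Sym2 V)) (hloop : ∀ e ∈ E, ¬ e.IsDiag)
    (htar : ∀ θ ∈ drawingAngles pos E, 2 * π / 3 < θ) :
    (∀ v : V, {w : V | s(v, w) ∈ E}.ncard ≤ 2) ∧
    (∀ (v : V) (w : (SimpleGraph.fromEdgeSet (E : Set (Sym2 V))).Walk v v),
      w.IsCycle → 7 ≤ w.length) := by
  constructor
  · -- degree bound
    intro v
    by_contra hcard
    push_neg at hcard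
    obtain ⟨t, hts, ht3⟩ := Set.exists_subset_card_eq
      (show 3 ≤ ({w : V | s(v, w) ∈ E}).ncard by omega)
    obtain ⟨a, b, c, hab, hac, hbc, rfl⟩ := Set.ncard_eq_three.mp ht3
    have ha : s(v, a) ∈ E := hts (by simp)
    have hb : s(v, b) ∈ E := hts (by simp)
    have hc : s(v, c) ∈ E := hts (by simp)
    have hav : a ≠ v := fun h => hloop _ ha (by simp [h])
    have hbv : b ≠ v := fun h => hloop _ hb (by simp [h])
    have hcv : c ≠ v := fun h => hloop _ hc (by simp [h])
    have hedge : ∀ x y : V, x ≠ y → y ≠ v → (s(v, x) : Sym2 V) ≠ s(v, y) := by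
      intro x y hxy hyv h
      rcases Sym2.eq_iff.mp h with ⟨_, h2⟩ | ⟨h1, _⟩
      · exact hxy h2
      · exact hyv h1.symm
    have k1 := htar _ (Or.inl ⟨v, a, b, ha, hb, hedge a b hab hbv, rfl⟩)
    have k2 := htar _ (Or.inl ⟨v, a, c, ha, hc, hedge a c hac hcv, rfl⟩)
    have k3 := htar _ (Or.inl ⟨v, b, c, hb, hc, hedge b c hbc hcv, rfl⟩)
    rw [EuclideanGeometry.angle] at k1 k2 k3
    simp only [vsub_eq_sub] at k1 k2 k3
    have hza : pos a - pos v ≠ 0 := sub_ne_zero.mpr (fun h => hav (hinj h))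
    have hzb : pos b - pos v ≠ 0 := sub_ne_zero.mpr (fun h => hbv (hinj h))
    have hzc : pos c - pos v ≠ 0 := sub_ne_zero.mpr (fun h => hcv (hinj h))
    exact aux_three_vectors hza hzb hzc k1 k2 k3
  · -- cycles have length at least 7
    intro v w hcyc
    by_contra hlen
    push_neg at hlen
    set p := w.length with hp
    have hp3 : 3 ≤ p := hcyc.three_le_length
    have hp6 : p ≤ 6 := by omega
    set g : EuclideanSpace ℝ (Fin 2) ≃ₗᵢ[ℝ] ℂ := Complex.orthonormalBasisOneI.repr.symm with hgdef
    set q : ℕ → ℂ := fun i => g (pos (w.getVert i)) with hqdef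
    set z : ℕ → ℂ := fun i => q (i+1) - q i with hzdef
    have hgv0 : w.getVert p = w.getVert 0 := by
      rw [SimpleGraph.Walk.getVert_zero, hp, SimpleGraph.Walk.getVert_length]
    have hadj : ∀ i, i < p → (SimpleGraph.fromEdgeSet (E : Set (Sym2 V))).Adj
        (w.getVert i) (w.getVert (i+1)) := fun i hi => w.adj_getVert_succ hi
    have hedge : ∀ i, i < p → s(w.getVert i, w.getVert (i+1)) ∈ E := by
      intro i hi
      have := ((SimpleGraph.fromEdgeSet_adj _).mp (hadj i hi)).1
      simpa using this
    have hne : ∀ i, i < p → w.getVert i ≠ w.getVert (i+1) := fun i hi => (hadj i hi).ne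
    have hznz : ∀ i, i < p → z i ≠ 0 := by
      intro i hi
      rw [hzdef]
      simp only [hqdef, sub_ne_zero]
      exact fun h => (hne i hi) (hinj (g.injective h)).symm
    have hsum : ∑ i ∈ Finset.range p, z i = 0 := by
      rw [hzdef, Finset.sum_range_sub (f := q), hqdef]
      simp [hgv0]
    apply no_small_polygon hp3 hp6 z hznz hsum
    intro i hi
    set jn := (i+1) % p with hjn
    have hjlt : jn < p := Nat.mod_lt _ (by omega)
    have hgvj : w.getVert jn = w.getVert (i+1) := by
      rcases Nat.lt_or_ge (i+1) p with h | h
      · rw [hjn, Nat.mod_eq_of_lt h]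
      · have hip : i + 1 = p := by omega
        rw [hjn, hip, Nat.mod_self, hgv0]
    set a := w.getVert i with hadef
    set u := w.getVert (i+1) with hudef
    set b := w.getVert (jn+1) with hbdef
    have he1 : s(u, a) ∈ E := by
      have := hedge i hi
      rwa [Sym2.eq_swap] at this
    have he2 : s(u, b) ∈ E := by
      have := hedge jn hjlt
      rwa [hgvj] at this
    have hau : a ≠ u := hne i hi
    have hab : a ≠ b := by
      intro h
      have hia : ∃ ia, w.getVert ia = a ∧ 1 ≤ ia ∧ ia ≤ p ∧ ia ≠ jn + 1 := by
        rcases Nat.eq_zero_or_pos i with h0 | h0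
        · refine ⟨p, ?_, by omega, le_rfl, ?_⟩
          · rw [hgv0, hadef, h0]
          · have : jn = 1 := by rw [hjn, h0]; exact Nat.mod_eq_of_lt (by omega)
            omega
        · refine ⟨i, rfl, h0, by omega, ?_⟩
          rcases Nat.lt_or_ge (i+1) p with hlt | hge
          · have : jn = i+1 := by rw [hjn]; exact Nat.mod_eq_of_lt hlt
            omega
          · have hip : i + 1 = p := by omega
            have : jn = 0 := by rw [hjn, hip, Nat.mod_self]
            omega
      obtain ⟨ia, hia1, hia2, hia3, hia4⟩ := hia
      exact hia4 (cycle_getVert_inj hcyc hia2 hia3 (by omega) (by omega)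
        (by rw [hia1, h, hbdef]))
    have hSymne : (s(u, a) : Sym2 V) ≠ s(u, b) := by
      intro h
      rcases Sym2.eq_iff.mp h with ⟨_, h2⟩ | ⟨_, h2⟩
      · exact hab h2
      · exact hau h2
    have hangle := htar _ (Or.inl ⟨u, a, b, he1, he2, hSymne, rfl⟩)
    rw [EuclideanGeometry.angle] at hangle
    simp only [vsub_eq_sub] at hangle
    have htrans : InnerProductGeometry.angle (pos a - pos u) (pos b - pos u)
        = InnerProductGeometry.angle (g (pos a) - g (pos u)) (g (pos b) - g (pos u)) := by
      rw [← map_sub, ← map_sub]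
      exact (g.toLinearIsometry.angle_map _ _).symm
    rw [htrans] at hangle
    have hga : g (pos a) - g (pos u) = -(z i) := by
      rw [hzdef]; simp only [hqdef]; ring
    have hgb : g (pos b) - g (pos u) = z jn := by
      rw [hzdef]
      simp only [hqdef]
      rw [hgvj]
    rw [hga, hgb, InnerProductGeometry.angle_neg_left] at hangle
    have hlt : InnerProductGeometry.angle (z i) (z jn) < π/3 := by linarith
    rwa [angle_eq_abs_arg (hznz i hi) (hznz jn hjlt)] at hlt
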